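/- Define Π_k(a,c;N) = (c)_N (a)_k (-N)_k / [(c-a)_N k! (c)_k] for k = 0,...,N. If c > 0 and a < 1-N, then Π_k(a,c;N) ≥ 0, and for k ≥ 1 one has k·Π_k(a,c;N) = [aN/(a-c-N+1)] · Π_{k-1}(a+1, c+1; N-1). -/

import Mathlib

/-- Pochhammer symbol `(a)_k = a(a+1)⋯(a+k-1)`. -/
noncomputable def poch (a : ℝ) (k : ℕ) : ℝ := ∏ i ∈ Finset.range k, (a + i)

/-- The weights `Π_k(a,c;N)`. -/
noncomputable def Piw (k : ℕ) (a c : ℝ) (N : ℕ) : ℝ :=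
  poch c N * poch a k * poch (-(N : ℝ)) k / (poch (c - a) N * (k.factorial : ℝ) * poch c k)

/-!
For `k ≤ N` the factors `a + i` and `-N + i` of `(a)_k (-N)_k` are both nonpositive, and every
other Pochhammer symbol in `Π_k(a,c;N)` has only positive factors, so the weight is nonnegative.
The recursion comes from peeling one factor off each symbol: `(x)_{k+1} = x (x+1)_k`, except
for `(c-a)_N = (c-a)_{N-1} (c-a+N-1)`, whose last factor is `-(a-c-N+1)`.
-/

theorem poch_succ_left (x : ℝ) (k : ℕ) : poch x (k + 1) = x * poch (x + 1) k := by
  simp only [poch, Finset.prod_range_succ', Nat.cast_add, Nat.cast_one, Nat.cast_zero, add_zero]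
  rw [mul_comm]
  congr 1
  exact Finset.prod_congr rfl fun i _ => by ring

theorem poch_succ_right (x : ℝ) (k : ℕ) : poch x (k + 1) = poch x k * (x + k) :=
  Finset.prod_range_succ _ _

theorem poch_pos_of_forall {x : ℝ} {k : ℕ} (h : ∀ i < k, 0 < x + i) : 0 < poch x k :=
  Finset.prod_pos fun i hi => h i (Finset.mem_range.mp hi)

theorem poch_pos {x : ℝ} (hx : 0 < x) (k : ℕ) : 0 < poch x k :=
  poch_pos_of_forall fun i _ => by positivity

theorem poch_mul_poch_nonneg {x y : ℝ} {k : ℕ} (hx : x + k ≤ 1) (hy : y + k ≤ 1) :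
    0 ≤ poch x k * poch y k := by
  rw [poch, poch, ← Finset.prod_mul_distrib]
  refine Finset.prod_nonneg fun i hi => mul_nonneg_of_nonpos_of_nonpos ?_ ?_
  all_goals
    have : (i : ℝ) + 1 ≤ k := by exact_mod_cast Finset.mem_range.mp hi
    linarith

theorem Piw_nonneg {a c : ℝ} {k N : ℕ} (hc : 0 < c) (ha : a < 1 - N) (hk : k ≤ N) :
    0 ≤ Piw k a c N := by
  have hkN : (k : ℝ) ≤ N := by exact_mod_cast hk
  have hnum : 0 ≤ poch a k * poch (-(N : ℝ)) k := poch_mul_poch_nonneg (by linarith) (by linarith)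
  -- a factor exists only if `N ≥ 1`, and then `c - a > c + N - 1 ≥ c`
  have hca : 0 < poch (c - a) N := poch_pos_of_forall fun i hi => by
    have : (i : ℝ) + 1 ≤ N := by exact_mod_cast hi
    linarith
  rw [Piw, mul_assoc]
  exact div_nonneg (mul_nonneg (poch_pos hc N).le hnum)
    (mul_pos (mul_pos hca (Nat.cast_pos.2 k.factorial_pos)) (poch_pos hc k)).le

theorem Piw_succ_succ {c : ℝ} (hc : c ≠ 0) (a : ℝ) (m n : ℕ) :
    ((m + 1 : ℕ) : ℝ) * Piw (m + 1) a c (n + 1)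
      = a * (n + 1 : ℕ) / (a - c - (n + 1 : ℕ) + 1) * Piw m (a + 1) (c + 1) n := by
  have hneg : (-((n + 1 : ℕ) : ℝ)) + 1 = -(n : ℝ) := by push_cast; ring
  rw [Piw, Piw, poch_succ_right (c - a) n, poch_succ_left c n, poch_succ_left a m,
    poch_succ_left _ m, poch_succ_left c m, hneg, Nat.factorial_succ,
    show c + 1 - (a + 1) = c - a by ring,
    show a - c - ((n + 1 : ℕ) : ℝ) + 1 = -(c - a + n) by push_cast; ring]
  field_simp
  push_cast
  ring

theorem Piw_nonneg_and_step_general (N : ℕ) (a c : ℝ)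
    (hc : 0 < c) (ha : a < 1 - N) :
    ∀ k ≤ N, 0 ≤ Piw k a c N ∧
      (1 ≤ k → (k : ℝ) * Piw k a c N
        = a * N / (a - c - N + 1) * Piw (k - 1) (a + 1) (c + 1) (N - 1)) := by
  intro k hk
  refine ⟨Piw_nonneg hc ha hk, fun hk1 => ?_⟩
  obtain ⟨m, rfl⟩ := Nat.exists_eq_add_of_le' hk1
  obtain ⟨n, rfl⟩ := Nat.exists_eq_add_of_le' (hk1.trans hk)
  simpa using Piw_succ_succ hc.ne' a m n

theorem Piw_nonneg_and_step (N : ℕ) (a c : ℝ) (hN : 1 ≤ N)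
    (hc : 0 < c) (ha : a < 1 - N) :
    ∀ k ≤ N, 0 ≤ Piw k a c N ∧
      (1 ≤ k → (k : ℝ) * Piw k a c N
        = a * N / (a - c - N + 1) * Piw (k - 1) (a + 1) (c + 1) (N - 1)) :=
  Piw_nonneg_and_step_general N a c hc ha
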